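/- The strict first-order KBO on ground terms is well-founded: there is no infinite descending chain t0 >_kbo t1 >_kbo t2 >_kbo ⋯. -/

import Mathlib

/-- Ground first-order terms over a signature `σ`: a symbol applied to a list
of ground terms. -/
inductive GTerm (σ : Type) : Type where
  | app : σ → List (GTerm σ) → GTerm σ

mutual
/-- KBO weight: `W (f s₁ ⋯ sₘ) = w f + Σᵢ k f i * W sᵢ` (arguments are
numbered starting from 1). -/
def GTerm.W {σ : Type} (w : σ → ℕ) (k : σ → ℕ → ℕ) : GTerm σ → ℕ
  | .app f args => w f + GTerm.sumW w k f 1 args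
/-- Weighted sum of the arguments of a symbol `f`, starting at index `i`. -/
def GTerm.sumW {σ : Type} (w : σ → ℕ) (k : σ → ℕ → ℕ) :
    σ → ℕ → List (GTerm σ) → ℕ
  | _, _, [] => 0
  | f, i, t :: ts => k f i * GTerm.W w k t + GTerm.sumW w k f (i + 1) ts
end
mutual
/-- The strict first-order KBO on ground terms: `t >kbo s` iff (1) `W t > W s`;
or (2) `W t = W s` and the head of `t` is greater in the precedence than the
head of `s`; or (3) `W t = W s`, the heads agree, and the argument tuples
compare lexicographically under `>kbo`. -/
inductive KBO {σ : Type} (w : σ → ℕ) (k : σ → ℕ → ℕ) (prec : σ → σ → Prop) :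
    GTerm σ → GTerm σ → Prop where
  | weight {t s} : GTerm.W w k s < GTerm.W w k t → KBO w k prec t s
  | heads {g f ts ss} : GTerm.W w k (.app g ts) = GTerm.W w k (.app f ss) →
      prec g f → KBO w k prec (.app g ts) (.app f ss)
  | args {g ts ss} : GTerm.W w k (.app g ts) = GTerm.W w k (.app g ss) →
      KBOLex w k prec ts ss → KBO w k prec (.app g ts) (.app g ss)
/-- Lexicographic extension of KBO to argument tuples: the first components
compare strictly, or they are equal and the tails compare lexicographically. -/
inductive KBOLex {σ : Type} (w : σ → ℕ) (k : σ → ℕ → ℕ) (prec : σ → σ → Prop) :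
    List (GTerm σ) → List (GTerm σ) → Prop where
  | rel {t s ts ss} : KBO w k prec t s → KBOLex w k prec (t :: ts) (s :: ss)
  | tail {t ts ss} : KBOLex w k prec ts ss → KBOLex w k prec (t :: ts) (t :: ss)
end

/-!
A descent from a term of weight `m` either lowers the weight, or keeps it and then lowers the head
in the precedence or, for equal heads, the argument tuple lexicographically. So one argues by
induction on the weight: once all lighter terms are accessible, a term of weight `m` is accessible
by a nested induction on its head and on its argument list. The arguments of a term of weight `m`
are lighter than `m` and, since all weights and coefficients are positive, there are at most `m`
of them; the bound on the length is what makes the lexicographic extension well-founded here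
(on lists of unbounded length it is not: `[b] > [a, b] > [a, a, b] > ⋯` for `a < b`).
-/

namespace List

variable {α : Type*}

def BoundedLex (r : α → α → Prop) (P : α → Prop) (n : ℕ) (l₁ l₂ : List α) : Prop :=
  (l₁.length ≤ n ∧ ∀ a ∈ l₁, P a) ∧ Lex r l₁ l₂

theorem acc_boundedLex_nil (r : α → α → Prop) (P : α → Prop) (n : ℕ) :
    Acc (BoundedLex r P n) [] :=
  ⟨_, fun _ h => nomatch h.2⟩

theorem acc_boundedLex {r : α → α → Prop} {P : α → Prop} (hP : ∀ a, P a → Acc r a) (n : ℕ)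
    {l : List α} (hl : l.length ≤ n ∧ ∀ a ∈ l, P a) : Acc (BoundedLex r P n) l := by
  induction n generalizing l with
  | zero =>
    rw [length_eq_zero_iff.1 (Nat.le_zero.1 hl.1)]
    exact acc_boundedLex_nil r P 0
  | succ n ih =>
    have bound_tail : ∀ {b : α} {t : List α}, ((b :: t).length ≤ n + 1 ∧ ∀ a ∈ b :: t, P a) →
        t.length ≤ n ∧ ∀ a ∈ t, P a :=
      fun h => ⟨by simpa using h.1, (forall_mem_cons.1 h.2).2⟩
    have acc_cons : ∀ a, Acc r a → ∀ t, Acc (BoundedLex r P n) t →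
        Acc (BoundedLex r P (n + 1)) (a :: t) := by
      intro a ha
      induction ha with
      | intro a _ iha =>
        intro t ht
        induction ht with
        | intro t _ iht =>
          refine ⟨_, fun l₁ ⟨hl₁, hlex⟩ => ?_⟩
          cases hlex with
          | nil => exact acc_boundedLex_nil r P _
          | rel hr => exact iha _ hr _ (ih (bound_tail hl₁))
          | cons hlex => exact iht _ ⟨bound_tail hl₁, hlex⟩
    obtain _ | ⟨a, t⟩ := l
    · exact acc_boundedLex_nil r P _
    · exact acc_cons a (hP a (hl.2 a mem_cons_self)) t (ih (bound_tail hl))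

end List

namespace GTerm

variable {σ : Type} (w : σ → ℕ) (k : σ → ℕ → ℕ)

theorem W_app (f : σ) (args : List (GTerm σ)) : W w k (app f args) = w f + sumW w k f 1 args := by
  rw [W]

theorem sumW_cons (f : σ) (i : ℕ) (t : GTerm σ) (ts : List (GTerm σ)) :
    sumW w k f i (t :: ts) = k f i * W w k t + sumW w k f (i + 1) ts := by
  rw [sumW]

variable {w k}

theorem W_pos (hw : ∀ f, 1 ≤ w f) (t : GTerm σ) : 0 < W w k t := by
  obtain ⟨f, args⟩ := t
  rw [W_app]
  exact Nat.lt_add_right _ (hw f)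

theorem W_le_mul_W (hk : ∀ f i, 1 ≤ k f i) (f : σ) (i : ℕ) (t : GTerm σ) :
    W w k t ≤ k f i * W w k t :=
  Nat.le_mul_of_pos_left _ (hk f i)

theorem W_le_sumW_of_mem (hk : ∀ f i, 1 ≤ k f i) {f : σ} {t : GTerm σ} :
    ∀ {i : ℕ} {ts : List (GTerm σ)}, t ∈ ts → W w k t ≤ sumW w k f i ts
  | i, _ :: ts, .head _ => by
    rw [sumW_cons]
    exact (W_le_mul_W hk f i t).trans (Nat.le_add_right _ _)
  | i, _ :: ts, .tail _ ht => by
    rw [sumW_cons]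
    exact (W_le_sumW_of_mem hk ht).trans (Nat.le_add_left _ _)

theorem length_le_sumW (hw : ∀ f, 1 ≤ w f) (hk : ∀ f i, 1 ≤ k f i) (f : σ) :
    ∀ (i : ℕ) (ts : List (GTerm σ)), ts.length ≤ sumW w k f i ts
  | _, [] => le_rfl
  | i, t :: ts => by
    rw [sumW_cons, List.length_cons, add_comm]
    exact Nat.add_le_add ((W_pos hw t).trans_le (W_le_mul_W hk f i t))
      (length_le_sumW hw hk f (i + 1) ts)

theorem bounded_args_of_W_eq (hw : ∀ f, 1 ≤ w f) (hk : ∀ f i, 1 ≤ k f i) {f : σ}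
    {args : List (GTerm σ)} {m : ℕ} (hm : W w k (app f args) = m) :
    args.length ≤ m ∧ ∀ u ∈ args, W w k u < m := by
  rw [W_app] at hm
  have hsum : sumW w k f 1 args < m := by have := hw f; omega
  exact ⟨(length_le_sumW hw hk f 1 args).trans hsum.le,
    fun u hu => (W_le_sumW_of_mem hk hu).trans_lt hsum⟩

end GTerm

section KBO

variable {σ : Type} {w : σ → ℕ} {k : σ → ℕ → ℕ} {prec : σ → σ → Prop}

theorem KBOLex.lex_flip {ts ss : List (GTerm σ)} (h : KBOLex w k prec ts ss) :
    List.Lex (flip (KBO w k prec)) ss ts := by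
  induction ts generalizing ss with
  | nil => cases h
  | cons t ts ih =>
    cases h with
    | rel h => exact .rel h
    | tail h => exact .cons (ih h)

theorem acc_KBO_of_W_eq (hw : ∀ f, 1 ≤ w f) (hk : ∀ f i, 1 ≤ k f i)
    (hprec_wf : WellFounded (fun f g => prec g f)) {m : ℕ}
    (hlt : ∀ u, GTerm.W w k u < m → Acc (flip (KBO w k prec)) u) {t : GTerm σ}
    (ht : GTerm.W w k t = m) : Acc (flip (KBO w k prec)) t := by
  let ArgsLex := List.BoundedLex (flip (KBO w k prec)) (fun u => GTerm.W w k u < m) m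
  have acc_args : ∀ {f args}, GTerm.W w k (.app f args) = m → Acc ArgsLex args :=
    fun hm => List.acc_boundedLex hlt m (GTerm.bounded_args_of_W_eq hw hk hm)
  suffices ∀ g, Acc (fun f g => prec g f) g → ∀ ts, Acc ArgsLex ts →
      GTerm.W w k (.app g ts) = m → Acc (flip (KBO w k prec)) (.app g ts) by
    obtain ⟨g, ts⟩ := t
    exact this g (hprec_wf.apply g) ts (acc_args ht) ht
  intro g hg
  induction hg with
  | intro g _ ihg =>
    intro ts hts
    induction hts with
    | intro ts _ iht =>
      intro hm
      refine ⟨_, fun s hs => ?_⟩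
      cases hs with
      | weight h => exact hlt s (hm ▸ h)
      | heads heq hpr =>
        have hm' := heq.symm.trans hm
        exact ihg _ hpr _ (acc_args hm') hm'
      | args heq hlex =>
        have hm' := heq.symm.trans hm
        exact iht _ ⟨GTerm.bounded_args_of_W_eq hw hk hm', hlex.lex_flip⟩ hm'

theorem acc_KBO (hw : ∀ f, 1 ≤ w f) (hk : ∀ f i, 1 ≤ k f i)
    (hprec_wf : WellFounded (fun f g => prec g f)) (t : GTerm σ) :
    Acc (flip (KBO w k prec)) t := by
  induction h : GTerm.W w k t using Nat.strong_induction_on generalizing t with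
  | _ m ih => exact acc_KBO_of_W_eq hw hk hprec_wf (fun u hu => ih _ hu u rfl) h

end KBO

/-- The strict first-order KBO on ground terms is well-founded: there is no
infinite descending chain `t₀ >kbo t₁ >kbo t₂ >kbo ⋯`. -/
theorem KBO_wellFounded {σ : Type} (w : σ → ℕ) (k : σ → ℕ → ℕ)
    (prec : σ → σ → Prop)
    (hw : ∀ f, 1 ≤ w f) (hk : ∀ f i, 1 ≤ k f i)
    (hprec_irrefl : ∀ f, ¬ prec f f)
    (hprec_trans : ∀ f g h, prec f g → prec g h → prec f h)
    (hprec_total : ∀ f g, f ≠ g → prec f g ∨ prec g f)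
    (hprec_wf : WellFounded (fun f g => prec g f)) :
    ¬ ∃ ts : ℕ → GTerm σ, ∀ i, KBO w k prec (ts i) (ts (i + 1)) := by
  rintro ⟨ts, hts⟩
  have hwf : WellFounded (flip (KBO w k prec)) := ⟨acc_KBO hw hk hprec_wf⟩
  exact (wellFounded_iff_isEmpty_descending_chain.1 hwf).elim ⟨ts, hts⟩
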